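/- arXiv:2312.14713 — 2 statements merged into one kernel-verified Lean document; each statement's English description precedes it below -/
import Mathlib

section
/- Let m ≥ 1 and let X be a nonempty set equipped with objective functions f_1, …, f_m : X → ℝ satisfying f_i(x) > 0 for every x ∈ X and every i ∈ {1,…,m}. Suppose x^ps ∈ X is Pareto optimal, i.e., there is no x ∈ X with f_i(x) ≤ f_i(x^ps) for all i and f_{i'}(x) < f_{i'}(x^ps) for some i'. Define, for each i, c_i = (Σ_{v=1}^m f_v(x^ps)) / f_i(x^ps) and the preference weights w_i = c_i / (Σ_{v=1}^m c_v). Then for every x ∈ X, max_{i∈{1,…,m}} w_i f_i(x^ps) ≤ max_{i∈{1,…,m}} w_i f_i(x); that is, x^ps minimizes the Tchebycheff scalarized function f^tch(x) = max_i w_i f_i(x) over X. -/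
/-- Proposition 1 of the paper: with preference weights generated from a Pareto
optimal point `xps`, that point minimizes the Tchebycheff scalarized function
`fᵗᶜʰ(x) = max_i w_i f_i(x)` over the whole decision set `X`. -/
theorem pareto_optimal_minimizes_tchebycheff
    {X : Type*} [Nonempty X] {m : ℕ} (hm : 1 ≤ m)
    (f : Fin m → X → ℝ)
    (hpos : ∀ (x : X) (i : Fin m), 0 < f i x)
    (xps : X)
    (hpareto : ¬ ∃ x : X, (∀ i : Fin m, f i x ≤ f i xps) ∧
        ∃ i' : Fin m, f i' x < f i' xps)
    (c w : Fin m → ℝ)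
    (hc : ∀ i : Fin m, c i = (∑ v : Fin m, f v xps) / f i xps)
    (hw : ∀ i : Fin m, w i = c i / ∑ v : Fin m, c v) :
    ∀ x : X,
      (Finset.univ.sup' ⟨⟨0, hm⟩, Finset.mem_univ _⟩ fun i : Fin m => w i * f i xps)
        ≤ Finset.univ.sup' ⟨⟨0, hm⟩, Finset.mem_univ _⟩ fun i : Fin m => w i * f i x := by
  intro x
  push_neg at hpareto
  have hSpos : 0 < ∑ v : Fin m, f v xps :=
    Finset.sum_pos (fun v _ => hpos xps v) ⟨⟨0, hm⟩, Finset.mem_univ _⟩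
  have hcpos : ∀ i, 0 < c i := fun i => by
    rw [hc i]; exact div_pos hSpos (hpos xps i)
  have hCpos : 0 < ∑ v : Fin m, c v :=
    Finset.sum_pos (fun v _ => hcpos v) ⟨⟨0, hm⟩, Finset.mem_univ _⟩
  have hwpos : ∀ i, 0 < w i := fun i => by
    rw [hw i]; exact div_pos (hcpos i) hCpos
  -- w_i * f_i(xps) is constant in i
  have hconst : ∀ i : Fin m, w i * f i xps =
      (∑ v : Fin m, f v xps) / ∑ v : Fin m, c v := fun i => by
    rw [hw i, hc i]
    have h1 : f i xps ≠ 0 := (hpos xps i).ne'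
    have h2 : (∑ v : Fin m, c v) ≠ 0 := hCpos.ne'
    field_simp
  -- Pareto: exists index with f_i xps ≤ f_i x
  have hex : ∃ i : Fin m, f i xps ≤ f i x := by
    by_cases h : ∀ i : Fin m, f i x ≤ f i xps
    · exact ⟨⟨0, hm⟩, hpareto x h _⟩
    · push_neg at h
      obtain ⟨i, hi⟩ := h
      exact ⟨i, hi.le⟩
  obtain ⟨i, hi⟩ := hex
  apply le_trans _ (Finset.le_sup' (fun i : Fin m => w i * f i x) (Finset.mem_univ i))
  have hub : w i * f i xps ≤ w i * f i x :=
    mul_le_mul_of_nonneg_left hi (hwpos i).le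
  refine le_trans (Finset.sup'_le _ _ fun j _ => ?_) hub
  rw [hconst j, hconst i]
end

section
/- Let m ≥ 1 and let f_1, …, f_m : X → ℝ satisfy f_i(x) > 0 for all x ∈ X and all i. Fix x^ps ∈ X, set c_i = (Σ_{v=1}^m f_v(x^ps)) / f_i(x^ps), Z = Σ_{i=1}^m c_i, and w_i = c_i / Z. If x^arb ∈ X is such that f_s(x^arb) > f_s(x^ps) for some index s ∈ {1,…,m}, then max_{i∈{1,…,m}} w_i f_i(x^ps) < max_{i∈{1,…,m}} w_i f_i(x^arb); in fact max_i w_i f_i(x^ps) = (1/Z)·Σ_{i=1}^m f_i(x^ps) < w_s f_s(x^arb) ≤ max_i w_i f_i(x^arb). -/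
/-- Core estimate in the proof of Proposition 1: with weights generated at `xps`,
any point `xarb` that is strictly worse than `xps` on some objective `s` has a
strictly larger Tchebycheff scalarized value; in fact
`max_i w_i f_i(xps) = (1/Z)·Σ_i f_i(xps) < w_s f_s(xarb) ≤ max_i w_i f_i(xarb)`. -/
theorem tchebycheff_strict_inequality_chain
    {X : Type*} {m : ℕ} (hm : 1 ≤ m)
    (f : Fin m → X → ℝ)
    (hpos : ∀ (x : X) (i : Fin m), 0 < f i x)
    (xps : X)
    (c : Fin m → ℝ) (Z : ℝ) (w : Fin m → ℝ)
    (hc : ∀ i : Fin m, c i = (∑ v : Fin m, f v xps) / f i xps)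
    (hZ : Z = ∑ i : Fin m, c i)
    (hw : ∀ i : Fin m, w i = c i / Z)
    (xarb : X) (s : Fin m) (hs : f s xarb > f s xps) :
    (Finset.univ.sup' ⟨⟨0, hm⟩, Finset.mem_univ _⟩ fun i : Fin m => w i * f i xps)
        < (Finset.univ.sup' ⟨⟨0, hm⟩, Finset.mem_univ _⟩ fun i : Fin m => w i * f i xarb) ∧
      (Finset.univ.sup' ⟨⟨0, hm⟩, Finset.mem_univ _⟩ fun i : Fin m => w i * f i xps)
        = (1 / Z) * ∑ i : Fin m, f i xps ∧
      (1 / Z) * (∑ i : Fin m, f i xps) < w s * f s xarb ∧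
      w s * f s xarb
        ≤ Finset.univ.sup' ⟨⟨0, hm⟩, Finset.mem_univ _⟩ fun i : Fin m => w i * f i xarb := by
  have hne : (Finset.univ : Finset (Fin m)).Nonempty := ⟨⟨0, hm⟩, Finset.mem_univ _⟩
  set S := ∑ v : Fin m, f v xps with hS
  have hSpos : 0 < S := Finset.sum_pos (fun i _ => hpos xps i) hne
  have hcpos : ∀ i, 0 < c i := fun i => by
    rw [hc]; exact div_pos hSpos (hpos xps i)
  have hZpos : 0 < Z := hZ ▸ Finset.sum_pos (fun i _ => hcpos i) hne
  have hwconst : ∀ i, w i * f i xps = (1 / Z) * S := fun i => by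
    have h1 := (hpos xps i).ne'
    have h2 := hZpos.ne'
    rw [hw, hc]
    field_simp
  have hsup_ps : (Finset.univ.sup' hne fun i : Fin m => w i * f i xps) = (1 / Z) * S := by
    rw [Finset.sup'_congr hne rfl (fun i _ => hwconst i)]
    exact Finset.sup'_const hne _
  have hwpos : 0 < w s := by rw [hw]; exact div_pos (hcpos s) hZpos
  have hlt : (1 / Z) * S < w s * f s xarb := by
    rw [← hwconst s]
    exact mul_lt_mul_of_pos_left hs hwpos
  have hle : w s * f s xarb ≤ Finset.univ.sup' hne fun i : Fin m => w i * f i xarb :=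
    Finset.le_sup' (fun i : Fin m => w i * f i xarb) (Finset.mem_univ s)
  exact ⟨by rw [hsup_ps]; exact hlt.trans_le hle, hsup_ps, hlt, hle⟩
end
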